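/- arXiv:1705.06270 — 3 statements merged into one kernel-verified Lean document; each statement's English description precedes it below -/
import Mathlib

section
/- The pair (q_l*, q_f*) with q_l* = (2(β + δ_f)(α − γ_l) − β(α − γ_f)) / (4(β + δ_f)(β + δ_l) − 2β²) and q_f* = BR(q_l*) is a bilevel optimum of the Stackelberg duopoly: q_f* is the unique maximizer of q_f ↦ Π_f(q_l*, q_f) over ℝ, and for every q_l ∈ ℝ and every q_f ∈ ℝ that maximizes Π_f(q_l, ·) over ℝ, one has Π_l(q_l*, q_f*) ≥ Π_l(q_l, q_f). -/
/-!
Completing the square: for fixed `ql` the follower's profit is a concave quadratic in `qf`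
with vertex `BR ql`, so `qf` is a best response iff `qf = BR ql`. Substituting `BR ql`,
the leader's profit becomes a concave quadratic in `ql` with leading coefficient
`β + δl - β² / (2 (β + δf)) > 0`, whose vertex is `ql*`.
-/

section ConcaveQuadratic

variable {a b c : ℝ}

theorem concaveQuadratic_vertex_sub (ha : a ≠ 0) (x : ℝ) :
    (b * (b / (2 * a)) - a * (b / (2 * a)) ^ 2 + c) - (b * x - a * x ^ 2 + c) =
      a * (x - b / (2 * a)) ^ 2 := by
  field_simp
  ring

theorem concaveQuadratic_le_vertex (ha : 0 < a) (x : ℝ) :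
    b * x - a * x ^ 2 + c ≤ b * (b / (2 * a)) - a * (b / (2 * a)) ^ 2 + c := by
  have := concaveQuadratic_vertex_sub (b := b) (c := c) ha.ne' x
  nlinarith [mul_nonneg ha.le (sq_nonneg (x - b / (2 * a)))]

theorem eq_vertex_of_vertex_le_concaveQuadratic (ha : 0 < a) {x : ℝ}
    (hx : b * (b / (2 * a)) - a * (b / (2 * a)) ^ 2 + c ≤ b * x - a * x ^ 2 + c) :
    x = b / (2 * a) := by
  have hsq : a * (x - b / (2 * a)) ^ 2 = 0 :=
    le_antisymm (by linarith [concaveQuadratic_vertex_sub (b := b) (c := c) ha.ne' x])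
      (by positivity)
  simpa [ha.ne', sub_eq_zero] using hsq

end ConcaveQuadratic

noncomputable section

namespace Stackelberg

variable (α β γl γf δl δf cl cf : ℝ)

def leaderProfit (ql qf : ℝ) : ℝ :=
  (α - β * (ql + qf)) * ql - (δl * ql ^ 2 + γl * ql + cl)

def followerProfit (ql qf : ℝ) : ℝ :=
  (α - β * (ql + qf)) * qf - (δf * qf ^ 2 + γf * qf + cf)

def bestResponse (ql : ℝ) : ℝ :=
  (α - γf - β * ql) / (2 * (β + δf))

def leaderOptimum : ℝ :=
  (2 * (β + δf) * (α - γl) - β * (α - γf)) / (4 * (β + δf) * (β + δl) - 2 * β ^ 2)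

theorem followerProfit_eq_quadratic (ql qf : ℝ) :
    followerProfit α β γf δf cf ql qf =
      (α - γf - β * ql) * qf - (β + δf) * qf ^ 2 + -cf := by
  unfold followerProfit
  ring

variable {α β γl γf δl δf cl cf}

theorem followerProfit_le_bestResponse (hA : 0 < β + δf) (ql qf : ℝ) :
    followerProfit α β γf δf cf ql qf ≤
      followerProfit α β γf δf cf ql (bestResponse α β γf δf ql) := by
  simp only [followerProfit_eq_quadratic]
  exact concaveQuadratic_le_vertex hA qf

theorem eq_bestResponse_of_le (hA : 0 < β + δf) {ql qf : ℝ}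
    (h : followerProfit α β γf δf cf ql (bestResponse α β γf δf ql) ≤
      followerProfit α β γf δf cf ql qf) :
    qf = bestResponse α β γf δf ql := by
  simp only [followerProfit_eq_quadratic] at h
  exact eq_vertex_of_vertex_le_concaveQuadratic hA h

theorem leaderProfit_bestResponse_eq_quadratic (hA : β + δf ≠ 0) (ql : ℝ) :
    leaderProfit α β γl δl cl ql (bestResponse α β γf δf ql) =
      (α - γl - β * (α - γf) / (2 * (β + δf))) * ql -
        (β + δl - β ^ 2 / (2 * (β + δf))) * ql ^ 2 + -cl := by
  unfold leaderProfit bestResponse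
  field_simp
  ring

theorem leaderProfit_bestResponse_le (hβ : 0 < β) (hδl : 0 < δl) (hδf : 0 < δf) (ql : ℝ) :
    leaderProfit α β γl δl cl ql (bestResponse α β γf δf ql) ≤
      leaderProfit α β γl δl cl (leaderOptimum α β γl γf δl δf)
        (bestResponse α β γf δf (leaderOptimum α β γl γf δl δf)) := by
  have hA : 0 < β + δf := by linarith
  have hD : 0 < 4 * (β + δf) * (β + δl) - 2 * β ^ 2 := by nlinarith
  have hK : 0 < β + δl - β ^ 2 / (2 * (β + δf)) := by
    have : β ^ 2 / (2 * (β + δf)) < β + δl := by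
      rw [div_lt_iff₀ (by positivity)]
      nlinarith
    linarith
  have hvertex : leaderOptimum α β γl γf δl δf =
      (α - γl - β * (α - γf) / (2 * (β + δf))) /
        (2 * (β + δl - β ^ 2 / (2 * (β + δf)))) := by
    rw [leaderOptimum, div_eq_div_iff hD.ne' (by positivity)]
    field_simp
    ring
  rw [leaderProfit_bestResponse_eq_quadratic hA.ne', leaderProfit_bestResponse_eq_quadratic hA.ne',
    hvertex]
  exact concaveQuadratic_le_vertex hK ql

end Stackelberg

end

open Stackelberg in
/-- Stackelberg duopoly: the pair `(ql*, qf*)` with `qf* = BR(ql*)` is a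
bilevel optimum: `qf*` is the unique maximizer of the follower's profit at
`ql*`, and the leader's profit at `(ql*, qf*)` is at least its profit at any
`(ql, qf)` where `qf` maximizes the follower's profit for `ql`. -/
theorem stackelberg_bilevel_optimum
    (α β γl γf δl δf cl cf : ℝ)
    (hβ : 0 < β) (hδl : 0 < δl) (hδf : 0 < δf) :
    ∀ qls qfs : ℝ,
      qls = (2 * (β + δf) * (α - γl) - β * (α - γf)) /
          (4 * (β + δf) * (β + δl) - 2 * β ^ 2) →
      qfs = (α - γf - β * qls) / (2 * (β + δf)) →
      ((∀ qf : ℝ,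
          (α - β * (qls + qf)) * qf - (δf * qf ^ 2 + γf * qf + cf) ≤
          (α - β * (qls + qfs)) * qfs - (δf * qfs ^ 2 + γf * qfs + cf)) ∧
        (∀ qf : ℝ,
          (α - β * (qls + qf)) * qf - (δf * qf ^ 2 + γf * qf + cf) =
          (α - β * (qls + qfs)) * qfs - (δf * qfs ^ 2 + γf * qfs + cf) →
          qf = qfs) ∧
        (∀ ql qf : ℝ,
          (∀ q : ℝ,
            (α - β * (ql + q)) * q - (δf * q ^ 2 + γf * q + cf) ≤
            (α - β * (ql + qf)) * qf - (δf * qf ^ 2 + γf * qf + cf)) →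
          (α - β * (ql + qf)) * ql - (δl * ql ^ 2 + γl * ql + cl) ≤
          (α - β * (qls + qfs)) * qls - (δl * qls ^ 2 + γl * qls + cl))) := by
  rintro _ _ rfl rfl
  have hA : 0 < β + δf := by linarith
  refine ⟨followerProfit_le_bestResponse (cf := cf) hA _,
    fun qf h => eq_bestResponse_of_le (cf := cf) hA h.ge, fun ql qf hbest => ?_⟩
  obtain rfl : qf = bestResponse α β γf δf ql := eq_bestResponse_of_le (cf := cf) hA (hbest _)
  exact leaderProfit_bestResponse_le (γl := γl) (cl := cl) hβ hδl hδf ql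
end

section
/- For every weight w with 0 < w ≤ 1, the government's weighted objective H(τ) = w·τ·q̂(τ) − (1−w)·k·q̂(τ) attains its maximum over τ ∈ ℝ at the unique point τ*(w) = (α − γ − k)/2 + k/(2w). -/
/-! The objective is a concave quadratic in `τ`: with `a = α − γ`, `s = β + δ`,
`H(τ*) − H(τ) = w (τ − τ*)² / (2s)`, which is nonnegative and vanishes only at `τ = τ*`. -/

theorem unique_max_of_sub_eq_pos_mul_sq {K : Type*}
    [Field K] [LinearOrder K] [IsStrictOrderedRing K]
    {g : K → K} {x₀ c : K} (hc : 0 < c) (h : ∀ x, g x₀ - g x = c * (x - x₀) ^ 2) :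
    (∀ x, g x ≤ g x₀) ∧ ∀ x, g x = g x₀ → x = x₀ := by
  refine ⟨fun x ↦ sub_nonneg.mp ?_, fun x hx ↦ ?_⟩
  · rw [h x]
    positivity
  · have hsq : c * (x - x₀) ^ 2 = 0 := by rw [← h x, hx, sub_self]
    simpa [hc.ne', sub_eq_zero] using hsq

namespace MiningTax

noncomputable section

def bestResponse (a s τ : ℝ) : ℝ := (a - τ) / (2 * s)

def weightedObjective (a s k w τ : ℝ) : ℝ :=
  w * τ * bestResponse a s τ - (1 - w) * k * bestResponse a s τ

def optimalTax (a k w : ℝ) : ℝ := (a - k) / 2 + k / (2 * w)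

theorem weightedObjective_optimalTax_sub {a s k w : ℝ} (hs : s ≠ 0) (hw : w ≠ 0) (τ : ℝ) :
    weightedObjective a s k w (optimalTax a k w) - weightedObjective a s k w τ =
      w / (2 * s) * (τ - optimalTax a k w) ^ 2 := by
  unfold weightedObjective bestResponse optimalTax
  field_simp
  ring

end

end MiningTax

open MiningTax in
theorem government_weighted_objective_unique_max_general
    (α β γ δ k : ℝ) (hβ : 0 < β) (hδ : 0 < δ)
    (w : ℝ) (hw0 : 0 < w) :
    (∀ τ : ℝ,
      w * τ * ((α - γ - τ) / (2 * (β + δ))) -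
          (1 - w) * k * ((α - γ - τ) / (2 * (β + δ))) ≤
      w * ((α - γ - k) / 2 + k / (2 * w)) *
            ((α - γ - ((α - γ - k) / 2 + k / (2 * w))) / (2 * (β + δ))) -
          (1 - w) * k *
            ((α - γ - ((α - γ - k) / 2 + k / (2 * w))) / (2 * (β + δ)))) ∧
    (∀ τ : ℝ,
      w * τ * ((α - γ - τ) / (2 * (β + δ))) -
          (1 - w) * k * ((α - γ - τ) / (2 * (β + δ))) =
      w * ((α - γ - k) / 2 + k / (2 * w)) *
            ((α - γ - ((α - γ - k) / 2 + k / (2 * w))) / (2 * (β + δ))) -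
          (1 - w) * k *
            ((α - γ - ((α - γ - k) / 2 + k / (2 * w))) / (2 * (β + δ))) →
      τ = (α - γ - k) / 2 + k / (2 * w)) := by
  have hs : 0 < β + δ := add_pos hβ hδ
  exact unique_max_of_sub_eq_pos_mul_sq (g := weightedObjective (α - γ) (β + δ) k w) (by positivity)
    (weightedObjective_optimalTax_sub hs.ne' hw0.ne')

/-- Mining tax model: for `0 < w ≤ 1`, the government's weighted objective
`H(τ) = w·τ·q̂(τ) − (1−w)·k·q̂(τ)` attains its maximum over `τ ∈ ℝ` at the
unique point `τ*(w) = (α − γ − k)/2 + k/(2w)`. -/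
theorem government_weighted_objective_unique_max
    (α β γ δ φ k : ℝ) (hβ : 0 < β) (hδ : 0 < δ) (hk : 0 < k)
    (w : ℝ) (hw0 : 0 < w) (hw1 : w ≤ 1) :
    (∀ τ : ℝ,
      w * τ * ((α - γ - τ) / (2 * (β + δ))) -
          (1 - w) * k * ((α - γ - τ) / (2 * (β + δ))) ≤
      w * ((α - γ - k) / 2 + k / (2 * w)) *
            ((α - γ - ((α - γ - k) / 2 + k / (2 * w))) / (2 * (β + δ))) -
          (1 - w) * k *
            ((α - γ - ((α - γ - k) / 2 + k / (2 * w))) / (2 * (β + δ)))) ∧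
    (∀ τ : ℝ,
      w * τ * ((α - γ - τ) / (2 * (β + δ))) -
          (1 - w) * k * ((α - γ - τ) / (2 * (β + δ))) =
      w * ((α - γ - k) / 2 + k / (2 * w)) *
            ((α - γ - ((α - γ - k) / 2 + k / (2 * w))) / (2 * (β + δ))) -
          (1 - w) * k *
            ((α - γ - ((α - γ - k) / 2 + k / (2 * w))) / (2 * (β + δ))) →
      τ = (α - γ - k) / 2 + k / (2 * w)) :=
  government_weighted_objective_unique_max_general α β γ δ k hβ hδ w hw0
end

section
/- Existence of an optimistic bilevel optimum under continuity and compactness: let U ⊆ ℝⁿ be nonempty and compact, let C ⊆ ℝᵐ be nonempty and compact, and let f, F : ℝⁿ × ℝᵐ → ℝ be continuous. Define Ψ(x) = {y ∈ C : f(x, y) ≤ f(x, z) for all z ∈ C}. Then there exist x* ∈ U and y* ∈ Ψ(x*) such that F(x*, y*) ≤ F(x, y) for all x ∈ U and all y ∈ Ψ(x); that is, F attains its minimum over the inducible region {(x, y) : x ∈ U, y ∈ Ψ(x)}. -/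
/-!
The inducible region is `U ×ˢ C` cut down by the condition `∀ z ∈ C, f (x, y) ≤ f (x, z)`,
an intersection of closed sets (one per `z`), so it is compact. It is nonempty because
`f (x, ·)` attains its minimum on the compact set `C`, so the continuous `F` attains its
minimum on it.
-/

open Set

section Bilevel

variable {X Y β : Type*} [LinearOrder β]

def reactionSet (f : X × Y → β) (C : Set Y) (x : X) : Set Y :=
  {y | y ∈ C ∧ ∀ z ∈ C, f (x, y) ≤ f (x, z)}

def inducibleRegion (f : X × Y → β) (U : Set X) (C : Set Y) : Set (X × Y) :=
  {p | p.1 ∈ U ∧ p.2 ∈ reactionSet f C p.1}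

theorem inducibleRegion_eq_prod_inter (f : X × Y → β) (U : Set X) (C : Set Y) :
    inducibleRegion f U C = (U ×ˢ C) ∩ {p | ∀ z ∈ C, f (p.1, p.2) ≤ f (p.1, z)} := by
  ext p
  simp [inducibleRegion, reactionSet, and_assoc]

variable [TopologicalSpace X] [TopologicalSpace Y] [TopologicalSpace β]

theorem isClosed_setOf_forall_le_snd [OrderClosedTopology β] {f : X × Y → β}
    (hf : Continuous f) (C : Set Y) :
    IsClosed {p : X × Y | ∀ z ∈ C, f (p.1, p.2) ≤ f (p.1, z)} := by
  simp only [ofPred_forall]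
  exact isClosed_biInter fun z _ =>
    isClosed_le hf (hf.comp (continuous_fst.prodMk continuous_const))

theorem isCompact_inducibleRegion [OrderClosedTopology β] {f : X × Y → β} (hf : Continuous f)
    {U : Set X} {C : Set Y} (hU : IsCompact U) (hC : IsCompact C) :
    IsCompact (inducibleRegion f U C) := by
  rw [inducibleRegion_eq_prod_inter]
  exact (hU.prod hC).inter_right (isClosed_setOf_forall_le_snd hf C)

theorem reactionSet_nonempty [ClosedIicTopology β] {f : X × Y → β}
    (hf : Continuous f) {C : Set Y} (hC : IsCompact C) (hCne : C.Nonempty) (x : X) :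
    (reactionSet f C x).Nonempty := by
  obtain ⟨y, hy, hmin⟩ :=
    hC.exists_isMinOn hCne (hf.comp (continuous_const.prodMk continuous_id)).continuousOn
  exact ⟨y, hy, fun z hz => hmin hz⟩

theorem inducibleRegion_nonempty [ClosedIicTopology β] {f : X × Y → β}
    (hf : Continuous f) {U : Set X} {C : Set Y} (hUne : U.Nonempty) (hC : IsCompact C)
    (hCne : C.Nonempty) : (inducibleRegion f U C).Nonempty := by
  obtain ⟨x, hx⟩ := hUne
  obtain ⟨y, hy⟩ := reactionSet_nonempty hf hC hCne x
  exact ⟨(x, y), hx, hy⟩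

theorem exists_isMinOn_inducibleRegion {γ : Type*} [LinearOrder γ] [TopologicalSpace γ]
    [ClosedIicTopology γ] [OrderClosedTopology β] {f : X × Y → β} {F : X × Y → γ}
    (hf : Continuous f) (hF : Continuous F) {U : Set X} {C : Set Y}
    (hUne : U.Nonempty) (hU : IsCompact U) (hCne : C.Nonempty) (hC : IsCompact C) :
    ∃ p ∈ inducibleRegion f U C, IsMinOn F (inducibleRegion f U C) p :=
  (isCompact_inducibleRegion hf hU hC).exists_isMinOn (inducibleRegion_nonempty hf hUne hC hCne)
    hF.continuousOn

end Bilevel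

/-- Existence of an optimistic bilevel optimum under continuity and
compactness: for nonempty compact `U ⊆ ℝⁿ` and `C ⊆ ℝᵐ` and continuous
`f, F`, there exist `x* ∈ U` and `y* ∈ Ψ(x*)` minimizing `F` over the
inducible region `{(x, y) : x ∈ U, y ∈ Ψ(x)}`, where
`Ψ(x) = {y ∈ C : ∀ z ∈ C, f(x, y) ≤ f(x, z)}`. -/
theorem optimistic_bilevel_optimum_exists
    (n m : ℕ) (U : Set (Fin n → ℝ)) (hUne : U.Nonempty) (hUc : IsCompact U)
    (C : Set (Fin m → ℝ)) (hCne : C.Nonempty) (hCc : IsCompact C)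
    (f F : (Fin n → ℝ) × (Fin m → ℝ) → ℝ)
    (hf : Continuous f) (hF : Continuous F) :
    ∃ xs ∈ U, ∃ ys : Fin m → ℝ,
      (ys ∈ C ∧ ∀ z ∈ C, f (xs, ys) ≤ f (xs, z)) ∧
      ∀ x ∈ U, ∀ y : Fin m → ℝ,
        (y ∈ C ∧ ∀ z ∈ C, f (x, y) ≤ f (x, z)) → F (xs, ys) ≤ F (x, y) := by
  obtain ⟨⟨xs, ys⟩, ⟨hxs, hys⟩, hmin⟩ :=
    exists_isMinOn_inducibleRegion hf hF hUne hUc hCne hCc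
  exact ⟨xs, hxs, ys, hys, fun x hx y hy => hmin ⟨hx, hy⟩⟩
end
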